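/- Let p be a prime number and let s ∈ ℂ with Re(s) > -1. Then ∫_{ℤ_p × ℤ_p} |x - y|_p^s dμ(x)dμ(y) = (1 - p^{-1})/(1 - p^{-1-s}). -/

import Mathlib

/-!
Translation invariance of `μ` on the additive subgroup `ℤ_p` turns the double integral into
`μ(ℤ_p) · ∫_{ℤ_p} |x|_p^s dμ`. Up to the null set `{0}`, `ℤ_p` is the disjoint union of the spheres
`|x|_p = p^{-n}`, `n ≥ 0`. Covering `ℤ_p` by the `p^n` disjoint balls `k + p^n ℤ_p`, `0 ≤ k < p^n`,
gives `μ(p^n ℤ_p) = p^{-n}`, so the `n`-th sphere has measure `(1 - p⁻¹) p^{-n}`, and `|x|_p^s`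
equals `p^{-ns}` on it. The single integral is thus a geometric series of ratio `p^{-1-s}`, which
converges exactly when `Re s > -1`.
-/

open MeasureTheory Complex Metric Set ENNReal

lemma Metric.pairwise_disjoint_sphere {X ι : Type*} [PseudoMetricSpace X] (x : X) {r : ι → ℝ}
    (hr : Function.Injective r) : Pairwise (Function.onFun Disjoint fun i => sphere x (r i)) :=
  fun _ _ hij => Set.disjoint_left.mpr fun _ hi hj =>
    hij (hr ((mem_sphere.mp hi).symm.trans (mem_sphere.mp hj)))

lemma AddSubgroup.indicator_comp_sub_right {G E : Type*} [AddGroup G] [Zero E] (H : AddSubgroup G)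
    (f : G → E) {g : G} (hg : g ∈ H) :
    ((H : Set G).indicator fun x => f (x - g)) = fun x => (H : Set G).indicator f (x - g) := by
  ext x
  have hmem : x - g ∈ H ↔ x ∈ H := by
    rw [sub_eq_add_neg]
    exact H.add_mem_cancel_right (H.neg_mem hg)
  by_cases hx : x ∈ H <;> simp [hx, hmem]

namespace MeasureTheory

section AddSubgroup

variable {G E : Type*} [AddGroup G] [NormedAddCommGroup E] (H : AddSubgroup G) {g : G}
variable [MeasurableSpace G] [MeasurableAdd G] {μ : Measure G} [μ.IsAddRightInvariant]

lemma IntegrableOn.comp_sub_right_addSubgroup (hH : MeasurableSet (H : Set G)) {f : G → E}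
    (hf : IntegrableOn f H μ) (hg : g ∈ H) : IntegrableOn (fun x => f (x - g)) H μ := by
  rw [← integrable_indicator_iff hH, H.indicator_comp_sub_right f hg]
  exact ((integrable_indicator_iff hH).mpr hf).comp_sub_right g

lemma setIntegral_comp_sub_right_addSubgroup [NormedSpace ℝ E] (hH : MeasurableSet (H : Set G))
    (f : G → E) (hg : g ∈ H) : ∫ x in H, f (x - g) ∂μ = ∫ x in H, f x ∂μ := by
  rw [← integral_indicator hH, ← integral_indicator hH, H.indicator_comp_sub_right f hg,
    integral_sub_right_eq_self]

variable [MeasurableSub₂ G] [SFinite μ]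

lemma IntegrableOn.comp_sub_prod_addSubgroup (hH : MeasurableSet (H : Set G)) (hHμ : μ H ≠ ∞)
    {f : G → E} (hf : StronglyMeasurable f) (hfi : IntegrableOn f H μ) :
    IntegrableOn (fun z : G × G => f (z.1 - z.2)) (H ×ˢ H) (μ.prod μ) := by
  have : IsFiniteMeasure (μ.restrict H) := isFiniteMeasure_restrict.mpr hHμ
  rw [IntegrableOn, ← Measure.prod_restrict]
  refine (integrable_prod_iff' (hf.comp_measurable measurable_sub).aestronglyMeasurable).mpr
    ⟨ae_restrict_of_forall_mem hH fun y hy => hfi.comp_sub_right_addSubgroup H hH hy, ?_⟩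
  refine (integrable_const (∫ x in H, ‖f x‖ ∂μ)).congr <|
    ae_restrict_of_forall_mem hH fun y hy => ?_
  exact (setIntegral_comp_sub_right_addSubgroup H hH (fun x => ‖f x‖) hy).symm

lemma setIntegral_comp_sub_prod_addSubgroup [NormedSpace ℝ E] [CompleteSpace E]
    (hH : MeasurableSet (H : Set G)) (hHμ : μ H ≠ ∞) {f : G → E} (hf : StronglyMeasurable f)
    (hfi : IntegrableOn f H μ) :
    ∫ z in H ×ˢ H, f (z.1 - z.2) ∂μ.prod μ = μ.real H • ∫ x in H, f x ∂μ := by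
  have hint := hfi.comp_sub_prod_addSubgroup H hH hHμ hf
  rw [IntegrableOn, ← Measure.prod_restrict] at hint
  rw [← Measure.prod_restrict, integral_prod_symm _ hint, ← measureReal_restrict_apply_univ,
    ← integral_const]
  exact setIntegral_congr_fun hH fun y hy => setIntegral_comp_sub_right_addSubgroup H hH f hy

end AddSubgroup

section Sphere

variable {E F : Type*} [SeminormedAddCommGroup E] [MeasurableSpace E] [OpensMeasurableSpace E]
  [NormedAddCommGroup F] (μ : Measure E) (g : ℝ → F) {r : ℝ}

lemma integrableOn_comp_norm_sphere (hr : μ (sphere 0 r) ≠ ∞) :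
    IntegrableOn (fun x => g ‖x‖) (sphere (0 : E) r) μ :=
  (integrableOn_const (C := g r) hr).congr_fun
    (fun x hx => by rw [mem_sphere_zero_iff_norm.mp hx]) isClosed_sphere.measurableSet

lemma setIntegral_comp_norm_sphere [NormedSpace ℝ F] [CompleteSpace F] :
    ∫ x in sphere (0 : E) r, g ‖x‖ ∂μ = μ.real (sphere 0 r) • g r := by
  rw [← setIntegral_const]
  exact setIntegral_congr_fun isClosed_sphere.measurableSet fun x hx => by
    rw [mem_sphere_zero_iff_norm.mp hx]

end Sphere

end MeasureTheory

lemma Complex.ofReal_zpow_neg_natCast_cpow {x : ℝ} (hx : 0 ≤ x) (n : ℕ) (s : ℂ) :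
    ((x ^ (-n : ℤ) : ℝ) : ℂ) ^ s = ((x : ℂ) ^ (-s)) ^ n := by
  rw [← Real.rpow_intCast, ofReal_cpow hx, ← cpow_nat_mul, ← cpow_mul] <;>
    simp [Complex.log_im, arg_ofReal_of_nonneg hx, Real.pi_pos, Real.pi_nonneg]

namespace Padic

variable {p : ℕ} [Fact p.Prime]

lemma one_lt_natCast_prime : (1 : ℝ) < p := by exact_mod_cast (Fact.out : p.Prime).one_lt

lemma zpow_neg_natCast_injective : Function.Injective fun n : ℕ => (p : ℝ) ^ (-n : ℤ) :=
  (zpow_right_injective₀ (zero_lt_one.trans one_lt_natCast_prime) one_lt_natCast_prime.ne').comp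
    (neg_injective.comp Nat.cast_injective)

lemma norm_natCast_cpow_neg_one_sub_lt_one {s : ℂ} (hs : -1 < s.re) :
    ‖(p : ℂ) ^ (-1 - s)‖ < 1 := by
  rw [norm_natCast_cpow_of_pos (Fact.out : p.Prime).pos]
  exact Real.rpow_lt_one_of_one_lt_of_neg one_lt_natCast_prime (by simp; linarith)

lemma exists_natCast_lt_pow_dist_le {x : ℚ_[p]} (hx : ‖x‖ ≤ 1) (n : ℕ) :
    ∃ k < p ^ n, dist x k ≤ (p : ℝ) ^ (-n : ℤ) := by
  let z : ℤ_[p] := ⟨x, hx⟩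
  refine ⟨z.appr n, z.appr_lt n, ?_⟩
  have := (PadicInt.norm_le_pow_iff_mem_span_pow _ n).mpr (z.appr_spec n)
  rwa [PadicInt.norm_def, PadicInt.coe_sub, PadicInt.coe_natCast] at this

lemma eq_of_dist_natCast_le {k l n : ℕ} (hk : k < p ^ n) (hl : l < p ^ n) {x : ℚ_[p]}
    (hxk : dist x k ≤ (p : ℝ) ^ (-n : ℤ)) (hxl : dist x l ≤ (p : ℝ) ^ (-n : ℤ)) : k = l := by
  have hkl : ‖(((k : ℤ) - l : ℤ) : ℚ_[p])‖ ≤ (p : ℝ) ^ (-n : ℤ) := by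
    have := (dist_triangle_max (k : ℚ_[p]) x l).trans (max_le (dist_comm x (k : ℚ_[p]) ▸ hxk) hxl)
    simpa [dist_eq_norm] using this
  rw [norm_int_le_pow_iff_dvd] at hkl
  have hk' : (k : ℤ) < (p ^ n : ℕ) := by exact_mod_cast hk
  have hl' : (l : ℤ) < (p ^ n : ℕ) := by exact_mod_cast hl
  push_cast at hk' hl'
  have := Int.eq_zero_of_abs_lt_dvd hkl (by rw [abs_lt]; omega)
  omega

lemma sphere_zpow_eq_closedBall_sdiff (n : ℕ) :
    sphere (0 : ℚ_[p]) ((p : ℝ) ^ (-n : ℤ)) =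
      closedBall 0 ((p : ℝ) ^ (-n : ℤ)) \ closedBall 0 ((p : ℝ) ^ (-(n + 1 : ℕ) : ℤ)) := by
  ext x
  have hlt := norm_le_pow_iff_norm_lt_pow_add_one x (-(n + 1 : ℕ) : ℤ)
  rw [show (-(n + 1 : ℕ) : ℤ) + 1 = -n by push_cast; ring] at hlt
  simp only [mem_sphere_zero_iff_norm, mem_sdiff, mem_closedBall_zero_iff, hlt, not_lt]
  exact le_antisymm_iff

lemma iUnion_sphere_zpow :
    ⋃ n : ℕ, sphere (0 : ℚ_[p]) ((p : ℝ) ^ (-n : ℤ)) = closedBall 0 1 \ {0} := by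
  ext x
  simp only [mem_iUnion, mem_sphere_zero_iff_norm, mem_sdiff, mem_closedBall_zero_iff,
    mem_singleton_iff]
  constructor
  · rintro ⟨n, hn⟩
    refine ⟨hn ▸ zpow_le_one_of_nonpos₀ one_lt_natCast_prime.le (by omega), ?_⟩
    rintro rfl
    exact (zpow_pos (zero_lt_one.trans one_lt_natCast_prime) _).ne' (by rw [← hn, norm_zero])
  · rintro ⟨hx, hx0⟩
    have hv := (norm_le_one_iff_val_nonneg x).mp hx
    exact ⟨x.valuation.toNat, by rw [norm_eq_zpow_neg_valuation hx0, Int.toNat_of_nonneg hv]⟩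

variable [MeasurableSpace ℚ_[p]] [BorelSpace ℚ_[p]] (μ : Measure ℚ_[p]) [μ.IsAddHaarMeasure]

lemma iUnion_sphere_zpow_ae_eq :
    ⋃ n : ℕ, sphere (0 : ℚ_[p]) ((p : ℝ) ^ (-n : ℤ)) =ᵐ[μ] closedBall 0 1 := by
  rw [iUnion_sphere_zpow]
  exact sdiff_null_ae_eq_self (measure_singleton 0)

lemma measure_closedBall_zpow (hμ : μ (closedBall 0 1) = 1) (n : ℕ) :
    μ (closedBall 0 ((p : ℝ) ^ (-n : ℤ))) = ((p : ℝ≥0∞) ^ n)⁻¹ := by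
  set r : ℝ := (p : ℝ) ^ (-n : ℤ)
  have hr : r ≤ 1 := zpow_le_one_of_nonpos₀ one_lt_natCast_prime.le (by omega)
  have hcover : closedBall 0 1 = ⋃ k ∈ Finset.range (p ^ n), closedBall (k : ℚ_[p]) r := by
    ext x
    simp only [mem_closedBall, dist_zero_right, mem_iUnion, Finset.mem_range, exists_prop]
    constructor
    · exact fun hx => exists_natCast_lt_pow_dist_le hx n
    · rintro ⟨k, -, hxk⟩
      have hk : ‖(k : ℚ_[p])‖ ≤ 1 := by exact_mod_cast norm_int_le_one k
      simpa using (dist_triangle_max x k 0).trans (max_le (hxk.trans hr) (by simpa using hk))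
  have hdisj : (Finset.range (p ^ n) : Set ℕ).PairwiseDisjoint
      fun k => closedBall (k : ℚ_[p]) r := by
    intro k hk l hl hkl
    refine Set.disjoint_left.mpr fun x hxk hxl => hkl ?_
    exact eq_of_dist_natCast_le (by simpa using hk) (by simpa using hl) hxk hxl
  rw [hcover, measure_biUnion_finset hdisj fun _ _ => measurableSet_closedBall] at hμ
  simp only [Measure.addHaar_closedBall_center, Finset.sum_const, Finset.card_range,
    nsmul_eq_mul, Nat.cast_pow] at hμ
  rw [mul_comm] at hμ
  exact ENNReal.eq_inv_of_mul_eq_one_left hμ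

lemma measureReal_sphere_zpow (hμ : μ (closedBall 0 1) = 1) (n : ℕ) :
    μ.real (sphere 0 ((p : ℝ) ^ (-n : ℤ))) = (1 - (p : ℝ)⁻¹) * (p : ℝ)⁻¹ ^ n := by
  have hsub : closedBall (0 : ℚ_[p]) ((p : ℝ) ^ (-(n + 1 : ℕ) : ℤ)) ⊆
      closedBall 0 ((p : ℝ) ^ (-n : ℤ)) :=
    closedBall_subset_closedBall (zpow_le_zpow_right₀ one_lt_natCast_prime.le (by omega))
  rw [sphere_zpow_eq_closedBall_sdiff, measureReal_sdiff hsub measurableSet_closedBall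
    measure_closedBall_lt_top.ne]
  simp only [measureReal_def, measure_closedBall_zpow μ hμ, toReal_inv, toReal_pow,
    toReal_natCast, inv_pow]
  ring

lemma setIntegral_sphere_norm_cpow (hμ : μ (closedBall 0 1) = 1) (s : ℂ) (n : ℕ) :
    ∫ x in sphere (0 : ℚ_[p]) ((p : ℝ) ^ (-n : ℤ)), (‖x‖ : ℂ) ^ s ∂μ =
      (1 - (p : ℂ)⁻¹) * ((p : ℂ) ^ (-1 - s)) ^ n := by
  have hp : (p : ℂ) ≠ 0 := Nat.cast_ne_zero.mpr (Fact.out : p.Prime).ne_zero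
  have hw : (p : ℂ) ^ (-1 - s) = (p : ℂ)⁻¹ * (p : ℂ) ^ (-s) := by
    rw [sub_eq_add_neg, cpow_add _ _ hp, cpow_neg_one]
  rw [setIntegral_comp_norm_sphere μ (fun r : ℝ => (r : ℂ) ^ s), measureReal_sphere_zpow μ hμ,
    ofReal_zpow_neg_natCast_cpow (Nat.cast_nonneg p), real_smul, hw]
  push_cast
  ring

lemma integrableOn_closedBall_norm_cpow (hμ : μ (closedBall 0 1) = 1) {s : ℂ} (hs : -1 < s.re) :
    IntegrableOn (fun x : ℚ_[p] => (‖x‖ : ℂ) ^ s) (closedBall 0 1) μ := by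
  refine IntegrableOn.congr_set_ae ?_ (iUnion_sphere_zpow_ae_eq μ).symm
  refine integrableOn_iUnion_of_summable_integral_norm (fun _ => integrableOn_comp_norm_sphere μ
    (fun r : ℝ => (r : ℂ) ^ s) (isCompact_sphere _ _).measure_lt_top.ne) ?_
  have hnorm (n : ℕ) : ∫ x in sphere (0 : ℚ_[p]) ((p : ℝ) ^ (-n : ℤ)), ‖(‖x‖ : ℂ) ^ s‖ ∂μ =
      ‖(1 - (p : ℂ)⁻¹) * ((p : ℂ) ^ (-1 - s)) ^ n‖ := by
    rw [← setIntegral_sphere_norm_cpow μ hμ,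
      setIntegral_comp_norm_sphere μ (fun r : ℝ => ‖(r : ℂ) ^ s‖),
      setIntegral_comp_norm_sphere μ (fun r : ℝ => (r : ℂ) ^ s), norm_smul,
      Real.norm_of_nonneg measureReal_nonneg, smul_eq_mul]
  simp_rw [hnorm, norm_mul]
  exact (summable_norm_geometric_of_norm_lt_one
    (norm_natCast_cpow_neg_one_sub_lt_one hs)).mul_left _

lemma setIntegral_closedBall_norm_cpow (hμ : μ (closedBall 0 1) = 1) {s : ℂ} (hs : -1 < s.re) :
    ∫ x in closedBall 0 1, (‖x‖ : ℂ) ^ s ∂μ = (1 - (p : ℂ)⁻¹) / (1 - (p : ℂ) ^ (-1 - s)) := by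
  have hint := (integrableOn_closedBall_norm_cpow μ hμ hs).congr_set_ae
    (iUnion_sphere_zpow_ae_eq μ)
  rw [← setIntegral_congr_set (iUnion_sphere_zpow_ae_eq μ)]
  refine (hasSum_integral_iUnion (fun _ => isClosed_sphere.measurableSet)
    (pairwise_disjoint_sphere 0 zpow_neg_natCast_injective) hint).unique ?_
  simp_rw [setIntegral_sphere_norm_cpow μ hμ, div_eq_mul_inv]
  exact (hasSum_geometric_of_norm_lt_one (norm_natCast_cpow_neg_one_sub_lt_one hs)).mul_left _

end Padic

/-- Example-3: the integral of `|x-y|_p^s` over `ℤ_p × ℤ_p`. -/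
theorem padic_zeta_integral_diff_Zp (p : ℕ) [Fact p.Prime]
    [MeasurableSpace ℚ_[p]] [BorelSpace ℚ_[p]]
    (μ : Measure ℚ_[p]) [μ.IsAddHaarMeasure]
    (hμ : μ {x : ℚ_[p] | ‖x‖ ≤ 1} = 1)
    (s : ℂ) (hs : -1 < s.re) :
    ∫ z in ({x : ℚ_[p] | ‖x‖ ≤ 1} ×ˢ {x : ℚ_[p] | ‖x‖ ≤ 1}),
        (‖z.1 - z.2‖ : ℂ) ^ s ∂(μ.prod μ)
      = (1 - (p : ℂ)⁻¹) / (1 - (p : ℂ) ^ (-1 - s)) := by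
  let Zp := (IsUltrametricDist.closedBall_openAddSubgroup ℚ_[p] one_pos).toAddSubgroup
  have hZp : (Zp : Set ℚ_[p]) = closedBall 0 1 := rfl
  have hball : {x : ℚ_[p] | ‖x‖ ≤ 1} = closedBall 0 1 := by ext; simp
  rw [hball] at hμ ⊢
  have hf : StronglyMeasurable fun x : ℚ_[p] => (‖x‖ : ℂ) ^ s := by fun_prop
  rw [← hZp, setIntegral_comp_sub_prod_addSubgroup Zp measurableSet_closedBall
    measure_closedBall_lt_top.ne hf (Padic.integrableOn_closedBall_norm_cpow μ hμ hs), hZp,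
    measureReal_def, hμ, toReal_one, one_smul, Padic.setIntegral_closedBall_norm_cpow μ hμ hs]
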